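/- Let d ≥ 3, η > 0, α ∈ (0, 1/3), let ℓ > ℓ' ≥ 0 be integers, let r be a real with r − 2^ℓ − 2^{ℓ'} > 0, and let S ⊆ ℤ^d, U₁ ⊆ S. Assume that for every w ∈ S ∩ B(0,r): (1−α)·η·(2^{ℓ'+1}+1)^d ≤ |S ∩ B(w, 2^{ℓ'})| ≤ (1+α)·η·(2^{ℓ'+1}+1)^d and (1−α)·η·(2^{ℓ+1}+1)^d ≤ |S ∩ B(w, 2^{ℓ})| ≤ (1+α)·η·(2^{ℓ+1}+1)^d. Then for every x ∈ S ∩ B(0, r − 2^ℓ − 2^{ℓ'}), the ball average (σ_{ℓ'})_{x,ℓ} := (1/|B(x,2^ℓ) ∩ S|)·Σ_{y ∈ B(x,2^ℓ) ∩ S} σ_{ℓ'}(y) satisfies ((1−α)/(1+α))·σ_ℓ(x) − c₀·2^{ℓ'−ℓ} ≤ (σ_{ℓ'})_{x,ℓ} ≤ ((1+α)/(1−α))·σ_ℓ(x) + c₀·2^{ℓ'−ℓ}, where c₀ = 3·d·2^{d−1}/η. -/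

import Mathlib

/-- The closed `ℓ^∞`-ball of radius `R ∈ ℤ` around `z` in `ℤ^d`. -/
def ball (d : ℕ) (z : Fin d → ℤ) (R : ℤ) : Set (Fin d → ℤ) :=
  {w | ∀ i, |w i - z i| ≤ R}

/-- The closed `ℓ^∞`-ball of real radius `r` around `z` in `ℤ^d`. -/
def ballR (d : ℕ) (z : Fin d → ℤ) (r : ℝ) : Set (Fin d → ℤ) :=
  {w | ∀ i, (|w i - z i| : ℝ) ≤ r}

/-- The local density `σ_ℓ(x) = |B(x,2^ℓ) ∩ U₁| / |B(x,2^ℓ) ∩ S|` (with `0/0 = 0`). -/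
noncomputable def density (d : ℕ) (S U₁ : Set (Fin d → ℤ)) (ℓ : ℕ) (x : Fin d → ℤ) : ℝ :=
  ((ball d x (2 ^ ℓ) ∩ U₁).ncard : ℝ) / ((ball d x (2 ^ ℓ) ∩ S).ncard : ℝ)

/-- The average of `σ_{ℓ'}` over `B(x,2^ℓ) ∩ S`. -/
noncomputable def densityAvg (d : ℕ) (S U₁ : Set (Fin d → ℤ)) (ℓ' ℓ : ℕ) (x : Fin d → ℤ) : ℝ :=
  (∑ᶠ y ∈ ball d x (2 ^ ℓ) ∩ S, density d S U₁ ℓ' y) / ((ball d x (2 ^ ℓ) ∩ S).ncard : ℝ)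

open Classical

lemma ball_coe (d : ℕ) (z : Fin d → ℤ) (R : ℤ) :
    ball d z R = ↑(Fintype.piFinset fun i => Finset.Icc (z i - R) (z i + R)) := by
  ext w
  simp only [ball, Set.mem_setOf_eq, Finset.mem_coe, Fintype.mem_piFinset, Finset.mem_Icc,
    abs_le]
  exact forall_congr' fun i => by omega

lemma ball_finite (d : ℕ) (z : Fin d → ℤ) (R : ℤ) : (ball d z R).Finite := by
  rw [ball_coe]; exact (Fintype.piFinset _).finite_toSet

lemma ball_ncard (d : ℕ) (z : Fin d → ℤ) (R : ℤ) :
    (ball d z R).ncard = (2 * R + 1).toNat ^ d := by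
  rw [ball_coe, Set.ncard_coe_finset, Fintype.card_piFinset]
  have : ∀ i : Fin d, (Finset.Icc (z i - R) (z i + R)).card = (2 * R + 1).toNat := by
    intro i; rw [Int.card_Icc]; congr 1; omega
  simp only [this, Finset.prod_const, Finset.card_univ, Fintype.card_fin]

lemma mem_ball_self (d : ℕ) (z : Fin d → ℤ) (R : ℤ) (hR : 0 ≤ R) : z ∈ ball d z R := by
  intro i; simp [hR]

lemma ball_mono (d : ℕ) (z : Fin d → ℤ) {R₁ R₂ : ℤ} (h : R₁ ≤ R₂) :
    ball d z R₁ ⊆ ball d z R₂ := fun w hw i => (hw i).trans h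

lemma ball_triangle (d : ℕ) {x y u : Fin d → ℤ} {R R' : ℤ} (hy : y ∈ ball d x R)
    (hu : u ∈ ball d y R') : u ∈ ball d x (R + R') := by
  intro i
  calc |u i - x i| ≤ |u i - y i| + |y i - x i| := abs_sub_le _ _ _
    _ ≤ R' + R := add_le_add (hu i) (hy i)
    _ = R + R' := add_comm _ _

lemma ball_subset_ball (d : ℕ) {x y : Fin d → ℤ} {R R' : ℤ} (hy : y ∈ ball d x (R - R')) :
    ball d y R' ⊆ ball d x R := by
  intro u hu
  have := ball_triangle d hy hu
  rwa [sub_add_cancel] at this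

lemma pow_sub_pow_le (a b : ℝ) (hb : 0 ≤ b) (hba : b ≤ a) :
    ∀ n : ℕ, a ^ n - b ^ n ≤ n * (a - b) * a ^ (n - 1) := by
  intro n
  induction n with
  | zero => simp
  | succ n ih =>
    rcases Nat.eq_zero_or_pos n with hn | hn
    · subst hn; simp
    have ha : 0 ≤ a := hb.trans hba
    have key : a ^ (n+1) - b ^ (n+1) = a * (a ^ n - b ^ n) + (a - b) * b ^ n := by ring
    have h2 : a * (a ^ n - b ^ n) ≤ a * (n * (a - b) * a ^ (n-1)) :=
      mul_le_mul_of_nonneg_left ih ha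
    have h3 : a * (n * (a - b) * a ^ (n-1)) = n * (a - b) * a ^ n := by
      rw [show a * (n * (a - b) * a ^ (n-1)) = n * (a - b) * (a * a ^ (n-1)) by ring,
        ← pow_succ']
      congr 2
      omega
    have h4 : (a - b) * b ^ n ≤ (a - b) * a ^ n :=
      mul_le_mul_of_nonneg_left (pow_le_pow_left₀ hb hba n) (by linarith)
    simp only [Nat.add_sub_cancel]
    calc a ^ (n+1) - b ^ (n+1) = a * (a ^ n - b ^ n) + (a - b) * b ^ n := key
      _ ≤ n * (a - b) * a ^ n + (a - b) * a ^ n := by linarith [h2.trans_eq h3]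
      _ = (↑(n+1)) * (a - b) * a ^ n := by push_cast; ring

lemma double_count (d : ℕ) (S U₁ : Set (Fin d → ℤ)) (x : Fin d → ℤ) (R R' : ℤ)
    (T W : Finset (Fin d → ℤ)) (hT : ↑T = ball d x R ∩ S)
    (hW : ↑W = ball d x (R + R') ∩ U₁) :
    ∑ y ∈ T, (ball d y R' ∩ U₁).ncard
      = ∑ u ∈ W, (ball d u R' ∩ (ball d x R ∩ S)).ncard := by
  classical
  have key1 : ∀ y ∈ T, (ball d y R' ∩ U₁).ncard
      = (W.filter (fun u => ∀ i, |u i - y i| ≤ R')).card := by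
    intro y hy
    have hyb : y ∈ ball d x R ∩ S := by rw [← hT]; exact_mod_cast hy
    rw [← Set.ncard_coe_finset]
    congr 1
    ext u
    simp only [Set.mem_inter_iff, Finset.coe_filter, Set.mem_setOf_eq, Finset.mem_coe,
      Finset.mem_filter]
    constructor
    · rintro ⟨hu1, hu2⟩
      refine ⟨?_, hu1⟩
      have : u ∈ ball d x (R + R') ∩ U₁ := ⟨ball_triangle d hyb.1 hu1, hu2⟩
      rw [← hW] at this; exact_mod_cast this
    · rintro ⟨hu1, hu2⟩
      have : u ∈ ball d x (R + R') ∩ U₁ := by rw [← hW]; exact_mod_cast hu1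
      exact ⟨hu2, this.2⟩
  have key2 : ∀ u ∈ W, (ball d u R' ∩ (ball d x R ∩ S)).ncard
      = (T.filter (fun y => ∀ i, |u i - y i| ≤ R')).card := by
    intro u hu
    rw [← Set.ncard_coe_finset]
    congr 1
    ext y
    simp only [Set.mem_inter_iff, Finset.coe_filter, Set.mem_setOf_eq, Finset.mem_coe,
      Finset.mem_filter]
    constructor
    · rintro ⟨hy1, hy2⟩
      have : y ∈ (↑T : Set _) := by rw [hT]; exact hy2
      exact ⟨this, fun i => by rw [abs_sub_comm]; exact hy1 i⟩
    · rintro ⟨hy1, hy2⟩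
      have : y ∈ ball d x R ∩ S := by rw [← hT]; exact_mod_cast hy1
      exact ⟨fun i => by rw [abs_sub_comm]; exact hy2 i, this⟩
  calc ∑ y ∈ T, (ball d y R' ∩ U₁).ncard
      = ∑ y ∈ T, (W.filter (fun u => ∀ i, |u i - y i| ≤ R')).card :=
        Finset.sum_congr rfl key1
    _ = ∑ y ∈ T, ∑ u ∈ W, if (∀ i, |u i - y i| ≤ R') then 1 else 0 := by
        simp only [Finset.card_filter]
    _ = ∑ u ∈ W, ∑ y ∈ T, if (∀ i, |u i - y i| ≤ R') then 1 else 0 := Finset.sum_comm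
    _ = ∑ u ∈ W, (T.filter (fun y => ∀ i, |u i - y i| ≤ R')).card := by
        simp only [Finset.card_filter]
    _ = ∑ u ∈ W, (ball d u R' ∩ (ball d x R ∩ S)).ncard :=
        Finset.sum_congr rfl fun u hu => (key2 u hu).symm

lemma ball_ncard_real (d : ℕ) (z : Fin d → ℤ) (R : ℤ) (hR : 0 ≤ R) :
    ((ball d z R).ncard : ℝ) = (2 * (R : ℝ) + 1) ^ d := by
  rw [ball_ncard, Nat.cast_pow]
  congr 1
  have h1 : ((2 * R + 1).toNat : ℤ) = 2 * R + 1 := Int.toNat_of_nonneg (by omega)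
  rw [← Int.cast_natCast, h1]
  push_cast
  ring

lemma annulus (d : ℕ) (x : Fin d → ℤ) (R₁ R₂ : ℤ) (h0 : 0 ≤ R₁) (h12 : R₁ ≤ R₂)
    (U : Set (Fin d → ℤ)) :
    ((ball d x R₂ ∩ U).ncard : ℝ)
      ≤ ((ball d x R₁ ∩ U).ncard : ℝ) + ((2 * (R₂ : ℝ) + 1) ^ d - (2 * (R₁ : ℝ) + 1) ^ d) := by
  have hfin2 : (ball d x R₂).Finite := ball_finite d x R₂
  have hsub : ball d x R₁ ⊆ ball d x R₂ := ball_mono d x h12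
  have hsplit : ball d x R₂ ∩ U ⊆ (ball d x R₁ ∩ U) ∪ (ball d x R₂ \ ball d x R₁) := by
    rintro w ⟨hw1, hw2⟩
    by_cases h : w ∈ ball d x R₁
    · exact Or.inl ⟨h, hw2⟩
    · exact Or.inr ⟨hw1, h⟩
  have h1 : (ball d x R₂ ∩ U).ncard
      ≤ (ball d x R₁ ∩ U).ncard + (ball d x R₂ \ ball d x R₁).ncard :=
    (Set.ncard_le_ncard hsplit (((ball_finite d x R₁).inter_of_left U).union hfin2.diff)).trans
      (Set.ncard_union_le _ _)
  have h2 : (ball d x R₂ \ ball d x R₁).ncard = (ball d x R₂).ncard - (ball d x R₁).ncard :=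
    Set.ncard_diff hsub (ball_finite d x R₁)
  have hle : (ball d x R₁).ncard ≤ (ball d x R₂).ncard := Set.ncard_le_ncard hsub hfin2
  have hb1 := ball_ncard_real d x R₁ h0
  have hb2 := ball_ncard_real d x R₂ (h0.trans h12)
  rw [← hb1, ← hb2]
  rw [h2] at h1
  have := h1
  have hcast : ((ball d x R₂ ∩ U).ncard : ℝ)
      ≤ ((ball d x R₁ ∩ U).ncard : ℝ) + (((ball d x R₂).ncard : ℝ) - ((ball d x R₁).ncard : ℝ)) := by
    rw [← Nat.cast_sub hle]
    exact_mod_cast h1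
  linarith

lemma pow_ratio_id (d ℓ ℓ' : ℕ) (hd : 1 ≤ d) :
    ((d : ℝ) * 2 ^ (ℓ' + 1) * 2 ^ ((ℓ + 2) * (d - 1))) / (2 ^ ((ℓ + 1) * d))
      = (d : ℝ) * 2 ^ (d - 1) * (2 : ℝ) ^ ((ℓ' : ℤ) - ℓ) := by
  rw [div_eq_iff (by positivity : ((2:ℝ) ^ ((ℓ + 1) * d)) ≠ 0)]
  have h2 : (2 : ℝ) ≠ 0 := by norm_num
  simp only [← zpow_natCast (2 : ℝ)]
  rw [mul_assoc, mul_assoc, mul_assoc, ← zpow_add₀ h2, ← zpow_add₀ h2, ← zpow_add₀ h2]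
  congr 1
  obtain ⟨k, rfl⟩ : ∃ k, d = k + 1 := ⟨d - 1, by omega⟩
  simp only [Nat.add_sub_cancel]
  push_cast
  ring

lemma err_bound (d ℓ ℓ' : ℕ) (hd : 1 ≤ d) (η α N Δ c : ℝ) (hη : 0 < η)
    (hα1 : 0 < 1 - α) (hc : 0 ≤ c) (hc3 : c ≤ 3 * (1 - α))
    (hN : (1 - α) * η * 2 ^ ((ℓ + 1) * d) ≤ N)
    (hΔ0 : 0 ≤ Δ) (hΔ : Δ ≤ d * 2 ^ (ℓ' + 1) * 2 ^ ((ℓ + 2) * (d - 1))) :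
    c * (Δ / N) ≤ (3 * d * 2 ^ (d - 1) / η) * (2 : ℝ) ^ ((ℓ' : ℤ) - ℓ) := by
  have hP : (0 : ℝ) < 2 ^ ((ℓ + 1) * d) := by positivity
  have hden : (0 : ℝ) < (1 - α) * η * 2 ^ ((ℓ + 1) * d) := by positivity
  have hNpos : 0 < N := lt_of_lt_of_le hden hN
  have h1 : Δ / N ≤ (d * 2 ^ (ℓ' + 1) * 2 ^ ((ℓ + 2) * (d - 1))) / ((1 - α) * η * 2 ^ ((ℓ + 1) * d)) :=
    div_le_div₀ (by positivity) hΔ hden hN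
  have h2 : (d * 2 ^ (ℓ' + 1) * 2 ^ ((ℓ + 2) * (d - 1))) / ((1 - α) * η * 2 ^ ((ℓ + 1) * d))
      = ((d : ℝ) * 2 ^ (d - 1) * (2 : ℝ) ^ ((ℓ' : ℤ) - ℓ)) / ((1 - α) * η) := by
    rw [show ((1 - α) * η * 2 ^ ((ℓ + 1) * d)) = (2 ^ ((ℓ + 1) * d)) * ((1 - α) * η) by ring,
      ← div_div, pow_ratio_id d ℓ ℓ' hd]
  have hD : (0 : ℝ) ≤ (d : ℝ) * 2 ^ (d - 1) * (2 : ℝ) ^ ((ℓ' : ℤ) - ℓ) := by positivity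
  have h3 : c * (Δ / N) ≤ c * (((d : ℝ) * 2 ^ (d - 1) * (2 : ℝ) ^ ((ℓ' : ℤ) - ℓ)) / ((1 - α) * η)) :=
    mul_le_mul_of_nonneg_left (h1.trans_eq h2) hc
  refine h3.trans ?_
  have hexp : c / ((1 - α) * η) ≤ 3 / η := by
    rw [div_le_div_iff₀ (by positivity) hη]
    nlinarith
  calc c * (((d : ℝ) * 2 ^ (d - 1) * (2 : ℝ) ^ ((ℓ' : ℤ) - ℓ)) / ((1 - α) * η))
      = (c / ((1 - α) * η)) * ((d : ℝ) * 2 ^ (d - 1) * (2 : ℝ) ^ ((ℓ' : ℤ) - ℓ)) := by ring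
    _ ≤ (3 / η) * ((d : ℝ) * 2 ^ (d - 1) * (2 : ℝ) ^ ((ℓ' : ℤ) - ℓ)) :=
        mul_le_mul_of_nonneg_right hexp hD
    _ = (3 * d * 2 ^ (d - 1) / η) * (2 : ℝ) ^ ((ℓ' : ℤ) - ℓ) := by ring

lemma diff_pow_le (n : ℕ) (a b c : ℝ) (hb : 0 ≤ b) (hba : b ≤ a) (hac : a ≤ c) :
    a ^ n - b ^ n ≤ n * (a - b) * c ^ (n - 1) := by
  refine (pow_sub_pow_le a b hb hba n).trans ?_
  have h1 : a ^ (n - 1) ≤ c ^ (n - 1) := pow_le_pow_left₀ (hb.trans hba) hac _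
  exact mul_le_mul_of_nonneg_left h1 (mul_nonneg (Nat.cast_nonneg n) (by linarith))

lemma ratio_up_le (α : ℝ) (h0 : 0 < α) (h13 : α < 1/3) : (1 + α) / (1 - α) ≤ 3 * (1 - α) := by
  have h1 : (0:ℝ) < 1 - α := by linarith
  rw [div_le_iff₀ h1]
  nlinarith [mul_pos h0 (by linarith : (0:ℝ) < 1/3 - α)]

lemma ratio_lo_le (α : ℝ) (h0 : 0 < α) (h13 : α < 1/3) : (1 - α) / (1 + α) ≤ 3 * (1 - α) := by
  have h1 : (0:ℝ) < 1 + α := by linarith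
  rw [div_le_iff₀ h1]
  nlinarith [mul_pos h0 (by linarith : (0:ℝ) < 1/3 - α)]


set_option maxHeartbeats 3200000 in
/-- Comparison of `σ_ℓ(x)` with the ball average of `σ_{ℓ'}` under two-sided volume
regularity (deterministic core of Lemma `sigma-regular` (ii)). -/
theorem density_average_comparison (d : ℕ) (hd : 3 ≤ d) (η : ℝ) (hη : 0 < η)
    (α : ℝ) (hα : α ∈ Set.Ioo (0 : ℝ) (1 / 3)) (ℓ ℓ' : ℕ) (hll : ℓ' < ℓ)
    (r : ℝ) (hr : 0 < r - 2 ^ ℓ - 2 ^ ℓ')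
    (S U₁ : Set (Fin d → ℤ)) (hU : U₁ ⊆ S)
    (hvol' : ∀ w ∈ S ∩ ballR d 0 r,
      (1 - α) * η * (2 ^ (ℓ' + 1) + 1) ^ d ≤ ((ball d w (2 ^ ℓ') ∩ S).ncard : ℝ) ∧
      ((ball d w (2 ^ ℓ') ∩ S).ncard : ℝ) ≤ (1 + α) * η * (2 ^ (ℓ' + 1) + 1) ^ d)
    (hvol : ∀ w ∈ S ∩ ballR d 0 r,
      (1 - α) * η * (2 ^ (ℓ + 1) + 1) ^ d ≤ ((ball d w (2 ^ ℓ) ∩ S).ncard : ℝ) ∧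
      ((ball d w (2 ^ ℓ) ∩ S).ncard : ℝ) ≤ (1 + α) * η * (2 ^ (ℓ + 1) + 1) ^ d)
    (x : Fin d → ℤ) (hx : x ∈ S ∩ ballR d 0 (r - 2 ^ ℓ - 2 ^ ℓ')) :
    (1 - α) / (1 + α) * density d S U₁ ℓ x - (3 * d * 2 ^ (d - 1) / η) * (2 : ℝ) ^ ((ℓ' : ℤ) - ℓ)
        ≤ densityAvg d S U₁ ℓ' ℓ x ∧
    densityAvg d S U₁ ℓ' ℓ x
        ≤ (1 + α) / (1 - α) * density d S U₁ ℓ x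
            + (3 * d * 2 ^ (d - 1) / η) * (2 : ℝ) ^ ((ℓ' : ℤ) - ℓ) := by
  classical
  obtain ⟨hα0, hα13⟩ := hα
  obtain ⟨hxS, hxB⟩ := hx
  simp only [ballR, Set.mem_setOf_eq] at hxB
  have h1α : (0:ℝ) < 1 - α := by linarith
  have h1α' : (0:ℝ) < 1 + α := by linarith
  have hd1 : 1 ≤ d := by omega
  have hR0 : (0:ℤ) < 2 ^ ℓ := pow_pos (by norm_num) ℓ
  have hR'0 : (0:ℤ) < 2 ^ ℓ' := pow_pos (by norm_num) ℓ'
  have h2R' : 2 * 2 ^ ℓ' ≤ (2:ℤ) ^ ℓ := by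
    calc (2:ℤ) * 2 ^ ℓ' = 2 ^ (ℓ' + 1) := by ring
      _ ≤ 2 ^ ℓ := pow_le_pow_right₀ (by norm_num) (by omega)
  have hrl : (0:ℝ) < 2 ^ ℓ := by positivity
  have hrl' : (0:ℝ) < 2 ^ ℓ' := by positivity
  have hrll' : (2:ℝ) ^ (ℓ' + 1) ≤ 2 ^ ℓ := pow_le_pow_right₀ one_le_two (by omega)
  have hone_l : (1:ℝ) ≤ 2 ^ ℓ := one_le_pow₀ one_le_two
  -- membership in the big real ball
  have hball_r : ∀ z : Fin d → ℤ, z ∈ ball d x (2 ^ ℓ + 2 ^ ℓ') → z ∈ ballR d 0 r := by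
    intro z hz
    simp only [ballR, Set.mem_setOf_eq]
    intro i
    have hzi := hz i
    have hxi := hxB i
    have hzr : |(z i : ℝ) - (x i : ℝ)| ≤ 2 ^ ℓ + 2 ^ ℓ' := by exact_mod_cast hzi
    have hxr : |(x i : ℝ)| ≤ r - 2 ^ ℓ - 2 ^ ℓ' := by
      have := hxi
      push_cast at this
      simpa using this
    have tri : |(z i : ℝ)| ≤ |(z i : ℝ) - (x i : ℝ)| + |(x i : ℝ)| := by
      calc |(z i : ℝ)| = |((z i : ℝ) - x i) + x i| := by norm_num
        _ ≤ |(z i : ℝ) - x i| + |(x i : ℝ)| := abs_add_le _ _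
    have : |(z i : ℝ)| ≤ r := by linarith
    push_cast
    simpa using this
  -- basic membership facts
  have hT_r : ∀ y ∈ ball d x (2 ^ ℓ) ∩ S, y ∈ S ∩ ballR d 0 r := fun y hy =>
    ⟨hy.2, hball_r y (ball_mono d x (by linarith : (2:ℤ) ^ ℓ ≤ 2 ^ ℓ + 2 ^ ℓ') hy.1)⟩
  have hx_r : x ∈ S ∩ ballR d 0 r := hT_r x ⟨mem_ball_self d x _ hR0.le, hxS⟩
  -- finite sets
  have hTfin : (ball d x (2 ^ ℓ) ∩ S).Finite := (ball_finite d x (2 ^ ℓ)).inter_of_left S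
  have hWfin : (ball d x (2 ^ ℓ + 2 ^ ℓ') ∩ U₁).Finite :=
    (ball_finite d x _).inter_of_left U₁
  have hW'fin : (ball d x (2 ^ ℓ - 2 ^ ℓ') ∩ U₁).Finite :=
    (ball_finite d x _).inter_of_left U₁
  set T : Finset (Fin d → ℤ) := hTfin.toFinset with hTdef
  set W : Finset (Fin d → ℤ) := hWfin.toFinset with hWdef
  set W' : Finset (Fin d → ℤ) := hW'fin.toFinset with hW'def
  have hTcoe : (↑T : Set (Fin d → ℤ)) = ball d x (2 ^ ℓ) ∩ S := hTfin.coe_toFinset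
  have hWcoe : (↑W : Set (Fin d → ℤ)) = ball d x (2 ^ ℓ + 2 ^ ℓ') ∩ U₁ := hWfin.coe_toFinset
  -- constants
  have hV' : (0:ℝ) < ((2:ℝ) ^ (ℓ' + 1) + 1) ^ d := by positivity
  have hc1 : (0:ℝ) < (1 - α) * η * ((2:ℝ) ^ (ℓ' + 1) + 1) ^ d := by positivity
  have hc2 : (0:ℝ) < (1 + α) * η * ((2:ℝ) ^ (ℓ' + 1) + 1) ^ d := by positivity
  -- denominator bounds
  have hNlb := (hvol x hx_r).1
  have hNpos : (0:ℝ) < ((ball d x (2 ^ ℓ) ∩ S).ncard : ℝ) :=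
    lt_of_lt_of_le (by positivity) hNlb
  have hN2 : (1 - α) * η * 2 ^ ((ℓ + 1) * d) ≤ ((ball d x (2 ^ ℓ) ∩ S).ncard : ℝ) := by
    refine le_trans ?_ hNlb
    have hbase : ((2:ℝ) ^ (ℓ + 1)) ^ d ≤ ((2:ℝ) ^ (ℓ + 1) + 1) ^ d :=
      pow_le_pow_left₀ (by positivity) (by linarith) d
    calc (1 - α) * η * 2 ^ ((ℓ + 1) * d) = (1 - α) * η * ((2:ℝ) ^ (ℓ + 1)) ^ d := by
          rw [pow_mul]
      _ ≤ (1 - α) * η * ((2:ℝ) ^ (ℓ + 1) + 1) ^ d :=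
          mul_le_mul_of_nonneg_left hbase (by positivity)
  -- the average as a finset sum
  have hAvg : densityAvg d S U₁ ℓ' ℓ x
      = (∑ y ∈ T, density d S U₁ ℓ' y) / ((ball d x (2 ^ ℓ) ∩ S).ncard : ℝ) := by
    simp only [densityAvg]
    congr 1
    rw [← hTcoe, finsum_mem_coe_finset]
  -- pointwise bounds and sums
  have hsum_up : ∑ y ∈ T, density d S U₁ ℓ' y
      ≤ (∑ y ∈ T, ((ball d y (2 ^ ℓ') ∩ U₁).ncard : ℝ))
          / ((1 - α) * η * ((2:ℝ) ^ (ℓ' + 1) + 1) ^ d) := by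
    rw [Finset.sum_div]
    refine Finset.sum_le_sum fun y hy => ?_
    have hy' : y ∈ ball d x (2 ^ ℓ) ∩ S := hTfin.mem_toFinset.mp hy
    have hb := hvol' y (hT_r y hy')
    simp only [density]
    exact div_le_div₀ (by positivity) le_rfl hc1 hb.1
  have hsum_lo : (∑ y ∈ T, ((ball d y (2 ^ ℓ') ∩ U₁).ncard : ℝ))
          / ((1 + α) * η * ((2:ℝ) ^ (ℓ' + 1) + 1) ^ d)
      ≤ ∑ y ∈ T, density d S U₁ ℓ' y := by
    rw [Finset.sum_div]
    refine Finset.sum_le_sum fun y hy => ?_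
    have hy' : y ∈ ball d x (2 ^ ℓ) ∩ S := hTfin.mem_toFinset.mp hy
    have hb := hvol' y (hT_r y hy')
    have hDpos : (0:ℝ) < ((ball d y (2 ^ ℓ') ∩ S).ncard : ℝ) := lt_of_lt_of_le hc1 hb.1
    simp only [density]
    exact div_le_div₀ (by positivity) le_rfl hDpos hb.2
  -- double counting
  have hdcN := double_count d S U₁ x (2 ^ ℓ) (2 ^ ℓ') T W hTcoe hWcoe
  have hdc : (∑ y ∈ T, ((ball d y (2 ^ ℓ') ∩ U₁).ncard : ℝ))
      = ∑ u ∈ W, ((ball d u (2 ^ ℓ') ∩ (ball d x (2 ^ ℓ) ∩ S)).ncard : ℝ) := by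
    exact_mod_cast congrArg (Nat.cast : ℕ → ℝ) hdcN
  -- upper bound on the double-counted sum
  have hg_up : ∀ u ∈ W, ((ball d u (2 ^ ℓ') ∩ (ball d x (2 ^ ℓ) ∩ S)).ncard : ℝ)
      ≤ (1 + α) * η * ((2:ℝ) ^ (ℓ' + 1) + 1) ^ d := by
    intro u hu
    have hu' : u ∈ ball d x (2 ^ ℓ + 2 ^ ℓ') ∩ U₁ := hWfin.mem_toFinset.mp hu
    have hu_r : u ∈ S ∩ ballR d 0 r := ⟨hU hu'.2, hball_r u hu'.1⟩
    have hsub : ball d u (2 ^ ℓ') ∩ (ball d x (2 ^ ℓ) ∩ S) ⊆ ball d u (2 ^ ℓ') ∩ S :=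
      fun v hv => ⟨hv.1, hv.2.2⟩
    have hmono : ((ball d u (2 ^ ℓ') ∩ (ball d x (2 ^ ℓ) ∩ S)).ncard : ℝ)
        ≤ ((ball d u (2 ^ ℓ') ∩ S).ncard : ℝ) := by
      exact_mod_cast Set.ncard_le_ncard hsub ((ball_finite d u _).inter_of_left S)
    exact hmono.trans (hvol' u hu_r).2
  have hsum_g_up : ∑ u ∈ W, ((ball d u (2 ^ ℓ') ∩ (ball d x (2 ^ ℓ) ∩ S)).ncard : ℝ)
      ≤ (W.card : ℝ) * ((1 + α) * η * ((2:ℝ) ^ (ℓ' + 1) + 1) ^ d) := by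
    calc ∑ u ∈ W, ((ball d u (2 ^ ℓ') ∩ (ball d x (2 ^ ℓ) ∩ S)).ncard : ℝ)
        ≤ ∑ _u ∈ W, (1 + α) * η * ((2:ℝ) ^ (ℓ' + 1) + 1) ^ d := Finset.sum_le_sum hg_up
      _ = (W.card : ℝ) * ((1 + α) * η * ((2:ℝ) ^ (ℓ' + 1) + 1) ^ d) := by
          rw [Finset.sum_const, nsmul_eq_mul]
  -- annulus bounds
  have hann_up := annulus d x (2 ^ ℓ) (2 ^ ℓ + 2 ^ ℓ') hR0.le (by linarith) U₁
  push_cast at hann_up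
  have hWc : (ball d x (2 ^ ℓ + 2 ^ ℓ') ∩ U₁).ncard = W.card :=
    Set.ncard_eq_toFinset_card _ hWfin
  rw [hWc] at hann_up
  -- W.card ≤ u + Δup where Δup := (2*(2^ℓ+2^ℓ')+1)^d - (2*2^ℓ+1)^d
  have hΔup0 : (0:ℝ) ≤ (2 * ((2:ℝ) ^ ℓ + 2 ^ ℓ') + 1) ^ d - (2 * (2:ℝ) ^ ℓ + 1) ^ d :=
    sub_nonneg.mpr (pow_le_pow_left₀ (by positivity) (by linarith) d)
  have hΔup_bound : (2 * ((2:ℝ) ^ ℓ + 2 ^ ℓ') + 1) ^ d - (2 * (2:ℝ) ^ ℓ + 1) ^ d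
      ≤ (d:ℝ) * 2 ^ (ℓ' + 1) * 2 ^ ((ℓ + 2) * (d - 1)) := by
    have h4 : (2:ℝ) ^ (ℓ + 2) = 4 * 2 ^ ℓ := by rw [pow_add]; ring
    have h2' : (2:ℝ) ^ (ℓ' + 1) = 2 * 2 ^ ℓ' := by rw [pow_add]; ring
    have key := diff_pow_le d (2 * ((2:ℝ) ^ ℓ + 2 ^ ℓ') + 1) (2 * (2:ℝ) ^ ℓ + 1)
      ((2:ℝ) ^ (ℓ + 2)) (by positivity) (by linarith) (by rw [h4]; linarith)
    have hdiff : (2 * ((2:ℝ) ^ ℓ + 2 ^ ℓ') + 1) - (2 * (2:ℝ) ^ ℓ + 1) = 2 ^ (ℓ' + 1) := by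
      rw [h2']; ring
    rw [hdiff, ← pow_mul] at key
    exact key
  have hWcard : (W.card : ℝ) ≤ ((ball d x (2 ^ ℓ) ∩ U₁).ncard : ℝ)
      + ((2 * ((2:ℝ) ^ ℓ + 2 ^ ℓ') + 1) ^ d - (2 * (2:ℝ) ^ ℓ + 1) ^ d) := by
    convert hann_up using 3 <;> push_cast <;> ring
  -- lower bound on the double-counted sum
  have hg_lo : ∀ u ∈ W', (1 - α) * η * ((2:ℝ) ^ (ℓ' + 1) + 1) ^ d
      ≤ ((ball d u (2 ^ ℓ') ∩ (ball d x (2 ^ ℓ) ∩ S)).ncard : ℝ) := by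
    intro u hu
    have hu' : u ∈ ball d x (2 ^ ℓ - 2 ^ ℓ') ∩ U₁ := hW'fin.mem_toFinset.mp hu
    have hsub : ball d u (2 ^ ℓ') ⊆ ball d x (2 ^ ℓ) := ball_subset_ball d hu'.1
    have heq : ball d u (2 ^ ℓ') ∩ (ball d x (2 ^ ℓ) ∩ S) = ball d u (2 ^ ℓ') ∩ S := by
      ext v
      constructor
      · rintro ⟨h1, _, h3⟩; exact ⟨h1, h3⟩
      · rintro ⟨h1, h3⟩; exact ⟨h1, hsub h1, h3⟩
    rw [heq]
    have hu_r : u ∈ S ∩ ballR d 0 r :=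
      ⟨hU hu'.2, hball_r u (ball_mono d x (by linarith : (2:ℤ) ^ ℓ - 2 ^ ℓ' ≤ 2 ^ ℓ + 2 ^ ℓ') hu'.1)⟩
    exact (hvol' u hu_r).1
  have hW'W : W' ⊆ W := by
    intro u hu
    have hu' := hW'fin.mem_toFinset.mp hu
    exact hWfin.mem_toFinset.mpr
      ⟨ball_mono d x (by linarith : (2:ℤ) ^ ℓ - 2 ^ ℓ' ≤ 2 ^ ℓ + 2 ^ ℓ') hu'.1, hu'.2⟩
  have hsum_g_lo : (W'.card : ℝ) * ((1 - α) * η * ((2:ℝ) ^ (ℓ' + 1) + 1) ^ d)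
      ≤ ∑ u ∈ W, ((ball d u (2 ^ ℓ') ∩ (ball d x (2 ^ ℓ) ∩ S)).ncard : ℝ) := by
    calc (W'.card : ℝ) * ((1 - α) * η * ((2:ℝ) ^ (ℓ' + 1) + 1) ^ d)
        = ∑ _u ∈ W', (1 - α) * η * ((2:ℝ) ^ (ℓ' + 1) + 1) ^ d := by
          rw [Finset.sum_const, nsmul_eq_mul]
      _ ≤ ∑ u ∈ W', ((ball d u (2 ^ ℓ') ∩ (ball d x (2 ^ ℓ) ∩ S)).ncard : ℝ) :=
          Finset.sum_le_sum hg_lo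
      _ ≤ ∑ u ∈ W, ((ball d u (2 ^ ℓ') ∩ (ball d x (2 ^ ℓ) ∩ S)).ncard : ℝ) :=
          Finset.sum_le_sum_of_subset_of_nonneg hW'W (fun u _ _ => by positivity)
  have hann_lo := annulus d x (2 ^ ℓ - 2 ^ ℓ') (2 ^ ℓ) (by linarith) (by linarith) U₁
  push_cast at hann_lo
  have hW'c : (ball d x (2 ^ ℓ - 2 ^ ℓ') ∩ U₁).ncard = W'.card :=
    Set.ncard_eq_toFinset_card _ hW'fin
  rw [hW'c] at hann_lo
  have hΔlo0 : (0:ℝ) ≤ (2 * (2:ℝ) ^ ℓ + 1) ^ d - (2 * ((2:ℝ) ^ ℓ - 2 ^ ℓ') + 1) ^ d := by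
    have h2' : (2:ℝ) ^ (ℓ' + 1) = 2 * 2 ^ ℓ' := by rw [pow_add]; ring
    refine sub_nonneg.mpr (pow_le_pow_left₀ ?_ (by linarith) d)
    linarith
  have hΔlo_bound : (2 * (2:ℝ) ^ ℓ + 1) ^ d - (2 * ((2:ℝ) ^ ℓ - 2 ^ ℓ') + 1) ^ d
      ≤ (d:ℝ) * 2 ^ (ℓ' + 1) * 2 ^ ((ℓ + 2) * (d - 1)) := by
    have h4 : (2:ℝ) ^ (ℓ + 2) = 4 * 2 ^ ℓ := by rw [pow_add]; ring
    have h2' : (2:ℝ) ^ (ℓ' + 1) = 2 * 2 ^ ℓ' := by rw [pow_add]; ring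
    have key := diff_pow_le d (2 * (2:ℝ) ^ ℓ + 1) (2 * ((2:ℝ) ^ ℓ - 2 ^ ℓ') + 1)
      ((2:ℝ) ^ (ℓ + 2)) (by linarith) (by linarith) (by rw [h4]; linarith)
    have hdiff : (2 * (2:ℝ) ^ ℓ + 1) - (2 * ((2:ℝ) ^ ℓ - 2 ^ ℓ') + 1) = 2 ^ (ℓ' + 1) := by
      rw [h2']; ring
    rw [hdiff, ← pow_mul] at key
    exact key
  have hW'card : ((ball d x (2 ^ ℓ) ∩ U₁).ncard : ℝ)
      - ((2 * (2:ℝ) ^ ℓ + 1) ^ d - (2 * ((2:ℝ) ^ ℓ - 2 ^ ℓ') + 1) ^ d) ≤ (W'.card : ℝ) := by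
    have : ((ball d x (2 ^ ℓ) ∩ U₁).ncard : ℝ) ≤ (W'.card : ℝ)
        + ((2 * (2:ℝ) ^ ℓ + 1) ^ d - (2 * ((2:ℝ) ^ ℓ - 2 ^ ℓ') + 1) ^ d) := by
      convert hann_lo using 3 <;> push_cast <;> ring
    linarith
  -- error bounds
  have herr_up : (1 + α) / (1 - α)
        * (((2 * ((2:ℝ) ^ ℓ + 2 ^ ℓ') + 1) ^ d - (2 * (2:ℝ) ^ ℓ + 1) ^ d)
            / ((ball d x (2 ^ ℓ) ∩ S).ncard : ℝ))
      ≤ (3 * d * 2 ^ (d - 1) / η) * (2 : ℝ) ^ ((ℓ' : ℤ) - ℓ) := by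
    exact err_bound d ℓ ℓ' hd1 η α _ _ _ hη h1α (by positivity)
      (ratio_up_le α hα0 hα13) hN2 hΔup0 hΔup_bound
  have herr_lo : (1 - α) / (1 + α)
        * (((2 * (2:ℝ) ^ ℓ + 1) ^ d - (2 * ((2:ℝ) ^ ℓ - 2 ^ ℓ') + 1) ^ d)
            / ((ball d x (2 ^ ℓ) ∩ S).ncard : ℝ))
      ≤ (3 * d * 2 ^ (d - 1) / η) * (2 : ℝ) ^ ((ℓ' : ℤ) - ℓ) := by
    exact err_bound d ℓ ℓ' hd1 η α _ _ _ hη h1α (by positivity)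
      (ratio_lo_le α hα0 hα13) hN2 hΔlo0 hΔlo_bound
  have hσ : density d S U₁ ℓ x
      = ((ball d x (2 ^ ℓ) ∩ U₁).ncard : ℝ) / ((ball d x (2 ^ ℓ) ∩ S).ncard : ℝ) := rfl
  have hSum0 : (0:ℝ) ≤ ∑ y ∈ T, density d S U₁ ℓ' y :=
    Finset.sum_nonneg fun y _ => by simp only [density]; positivity
  constructor
  · -- lower bound
    have hnum : ((((ball d x (2 ^ ℓ) ∩ U₁).ncard : ℝ)
          - ((2 * (2:ℝ) ^ ℓ + 1) ^ d - (2 * ((2:ℝ) ^ ℓ - 2 ^ ℓ') + 1) ^ d))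
            * ((1 - α) * η * ((2:ℝ) ^ (ℓ' + 1) + 1) ^ d))
          / ((1 + α) * η * ((2:ℝ) ^ (ℓ' + 1) + 1) ^ d)
        ≤ ∑ y ∈ T, density d S U₁ ℓ' y := by
      refine le_trans ?_ hsum_lo
      rw [hdc]
      refine div_le_div₀ ?_ ?_ hc2 le_rfl
      · exact le_trans (by positivity) hsum_g_lo
      · exact le_trans (mul_le_mul_of_nonneg_right hW'card hc1.le) hsum_g_lo
    have hchain : ((((ball d x (2 ^ ℓ) ∩ U₁).ncard : ℝ)
          - ((2 * (2:ℝ) ^ ℓ + 1) ^ d - (2 * ((2:ℝ) ^ ℓ - 2 ^ ℓ') + 1) ^ d))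
            * ((1 - α) * η * ((2:ℝ) ^ (ℓ' + 1) + 1) ^ d))
          / ((1 + α) * η * ((2:ℝ) ^ (ℓ' + 1) + 1) ^ d)
          / ((ball d x (2 ^ ℓ) ∩ S).ncard : ℝ)
        ≤ densityAvg d S U₁ ℓ' ℓ x := by
      rw [hAvg]
      exact div_le_div₀ hSum0 hnum hNpos le_rfl
    have hsplit : ((((ball d x (2 ^ ℓ) ∩ U₁).ncard : ℝ)
          - ((2 * (2:ℝ) ^ ℓ + 1) ^ d - (2 * ((2:ℝ) ^ ℓ - 2 ^ ℓ') + 1) ^ d))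
            * ((1 - α) * η * ((2:ℝ) ^ (ℓ' + 1) + 1) ^ d))
          / ((1 + α) * η * ((2:ℝ) ^ (ℓ' + 1) + 1) ^ d)
          / ((ball d x (2 ^ ℓ) ∩ S).ncard : ℝ)
        = (1 - α) / (1 + α)
            * (((ball d x (2 ^ ℓ) ∩ U₁).ncard : ℝ) / ((ball d x (2 ^ ℓ) ∩ S).ncard : ℝ))
          - (1 - α) / (1 + α)
            * (((2 * (2:ℝ) ^ ℓ + 1) ^ d - (2 * ((2:ℝ) ^ ℓ - 2 ^ ℓ') + 1) ^ d)
                / ((ball d x (2 ^ ℓ) ∩ S).ncard : ℝ)) := by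
      field_simp
    rw [hsplit] at hchain
    rw [hσ]
    linarith
  · -- upper bound
    have hnum : ∑ y ∈ T, density d S U₁ ℓ' y
        ≤ ((((ball d x (2 ^ ℓ) ∩ U₁).ncard : ℝ)
            + ((2 * ((2:ℝ) ^ ℓ + 2 ^ ℓ') + 1) ^ d - (2 * (2:ℝ) ^ ℓ + 1) ^ d))
              * ((1 + α) * η * ((2:ℝ) ^ (ℓ' + 1) + 1) ^ d))
            / ((1 - α) * η * ((2:ℝ) ^ (ℓ' + 1) + 1) ^ d) := by
      refine hsum_up.trans ?_
      rw [hdc]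
      refine div_le_div₀ ?_ ?_ hc1 le_rfl
      · have h0 : (0:ℝ) ≤ ((ball d x (2 ^ ℓ) ∩ U₁).ncard : ℝ)
            + ((2 * ((2:ℝ) ^ ℓ + 2 ^ ℓ') + 1) ^ d - (2 * (2:ℝ) ^ ℓ + 1) ^ d) := by
          have hnn : (0:ℝ) ≤ ((ball d x (2 ^ ℓ) ∩ U₁).ncard : ℝ) := Nat.cast_nonneg _
          linarith
        positivity
      · exact hsum_g_up.trans (mul_le_mul_of_nonneg_right hWcard hc2.le)
    have hchain : densityAvg d S U₁ ℓ' ℓ x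
        ≤ ((((ball d x (2 ^ ℓ) ∩ U₁).ncard : ℝ)
            + ((2 * ((2:ℝ) ^ ℓ + 2 ^ ℓ') + 1) ^ d - (2 * (2:ℝ) ^ ℓ + 1) ^ d))
              * ((1 + α) * η * ((2:ℝ) ^ (ℓ' + 1) + 1) ^ d))
            / ((1 - α) * η * ((2:ℝ) ^ (ℓ' + 1) + 1) ^ d)
            / ((ball d x (2 ^ ℓ) ∩ S).ncard : ℝ) := by
      rw [hAvg]
      refine div_le_div₀ ?_ hnum hNpos le_rfl
      have h0 : (0:ℝ) ≤ ((ball d x (2 ^ ℓ) ∩ U₁).ncard : ℝ)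
          + ((2 * ((2:ℝ) ^ ℓ + 2 ^ ℓ') + 1) ^ d - (2 * (2:ℝ) ^ ℓ + 1) ^ d) := by
        have hnn : (0:ℝ) ≤ ((ball d x (2 ^ ℓ) ∩ U₁).ncard : ℝ) := Nat.cast_nonneg _
        linarith
      positivity
    have hsplit : ((((ball d x (2 ^ ℓ) ∩ U₁).ncard : ℝ)
            + ((2 * ((2:ℝ) ^ ℓ + 2 ^ ℓ') + 1) ^ d - (2 * (2:ℝ) ^ ℓ + 1) ^ d))
              * ((1 + α) * η * ((2:ℝ) ^ (ℓ' + 1) + 1) ^ d))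
            / ((1 - α) * η * ((2:ℝ) ^ (ℓ' + 1) + 1) ^ d)
            / ((ball d x (2 ^ ℓ) ∩ S).ncard : ℝ)
        = (1 + α) / (1 - α)
            * (((ball d x (2 ^ ℓ) ∩ U₁).ncard : ℝ) / ((ball d x (2 ^ ℓ) ∩ S).ncard : ℝ))
          + (1 + α) / (1 - α)
            * (((2 * ((2:ℝ) ^ ℓ + 2 ^ ℓ') + 1) ^ d - (2 * (2:ℝ) ^ ℓ + 1) ^ d)
                / ((ball d x (2 ^ ℓ) ∩ S).ncard : ℝ)) := by
      field_simp
    rw [hsplit] at hchain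
    rw [hσ]
    linarith
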